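/- Let D be a division ring that is a ℚ-algebra, and let X, Y ∈ D with Y ≠ 0 and X·Y = Y·(X + 1). Then (Y⁻¹X)·Y − Y·(Y⁻¹X) = 1, and there exists an injective ℚ-algebra homomorphism φ : A₁(ℚ) → D with φ(s) = Y⁻¹X and φ(t) = Y. -/

import Mathlib

/-- The defining relation of the first Weyl algebra: `s·t = t·s + 1`. -/
inductive weylRel : FreeAlgebra ℚ (Fin 2) → FreeAlgebra ℚ (Fin 2) → Prop
  | rel : weylRel (FreeAlgebra.ι ℚ 0 * FreeAlgebra.ι ℚ 1)
      (FreeAlgebra.ι ℚ 1 * FreeAlgebra.ι ℚ 0 + 1)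

/-- The first Weyl algebra `A₁(ℚ) = ℚ⟨s, t : st - ts = 1⟩`. -/
abbrev WeylAlg : Type := RingQuot weylRel

/-- The generator `s` of the first Weyl algebra. -/
noncomputable def Ws : WeylAlg := RingQuot.mkAlgHom ℚ weylRel (FreeAlgebra.ι ℚ 0)

/-- The generator `t` of the first Weyl algebra. -/
noncomputable def Wt : WeylAlg := RingQuot.mkAlgHom ℚ weylRel (FreeAlgebra.ι ℚ 1)

/-!
Every element of the Weyl algebra is normally ordered: it is `∑ qⱼ(t) sʲ` for some
`f = ∑ qⱼ Xʲ : ℚ[X][X]`, because the set of such sums contains `1` and is closed under right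
multiplication by `s` and by `t`. Conversely, if `z y = y z + 1` in a nontrivial ℚ-algebra, then
`a ↦ a y - y a` acts on `∑ qⱼ(y) zʲ` as the derivative in the outer variable, and `a ↦ z a - a z`
acts on `q(y)` as the derivative of `q`. Both derivatives lower the degree, so an induction on
degree shows that `∑ qⱼ(y) zʲ = 0` only for `f = 0`. Hence the map `s ↦ Y⁻¹X, t ↦ Y` is injective.
-/

open Polynomial

universe u v w

theorem Polynomial.injective_of_map_derivative_eq_zero {R : Type u} {M : Type v} [Ring R]
    [IsAddTorsionFree R] [AddZeroClass M] (L : R[X] →+ M) (hC : ∀ r, L (C r) = 0 → r = 0)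
    (hD : ∀ p, L p = 0 → L (derivative p) = 0) : Function.Injective L := by
  refine (injective_iff_map_eq_zero L).mpr fun p hp ↦ ?_
  induction hn : p.natDegree using Nat.strong_induction_on generalizing p with
  | _ n ih =>
    obtain rfl | hn0 := eq_or_ne n 0
    · rw [eq_C_of_natDegree_eq_zero hn] at hp ⊢
      rw [hC _ hp, C_0]
    · have hp' : derivative p = 0 :=
        ih _ (hn ▸ natDegree_derivative_lt (hn ▸ hn0)) _ (hD p hp) rfl
      exact absurd (derivative_eq_zero.mp hp') (hn ▸ hn0)

section OrderedEval

variable {R : Type u} {A : Type v} [CommRing R] [Ring A] [Algebra R A] {z y : A}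

theorem mul_aeval_of_mul_eq_mul_add_one (h : z * y = y * z + 1) (p : R[X]) :
    z * aeval y p = aeval y p * z + aeval y (derivative p) := by
  induction p using Polynomial.induction_on with
  | C a => simp [Algebra.commutes]
  | add p q hp hq =>
    simp only [map_add, mul_add, add_mul, hp, hq]
    abel
  | monomial n a ih =>
    rw [pow_succ, ← mul_assoc]
    generalize C a * X ^ n = p at ih ⊢
    rw [derivative_mul, derivative_X, mul_one, map_add, map_mul, map_mul, aeval_X, ← mul_assoc,
      ih, add_mul, mul_assoc, h]
    noncomm_ring

variable (z y) in
noncomputable def orderedEval : R[X][X] →ₗ[R] A where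
  toFun f := eval₂ (aeval y).toRingHom z f
  map_add' _ _ := eval₂_add _ _
  map_smul' r f := by
    rw [← algebraMap_smul R[X] r f, eval₂_smul, Algebra.smul_def]
    simp

theorem orderedEval_C (q : R[X]) : orderedEval z y (C q) = aeval y q := eval₂_C _ _

theorem orderedEval_mul_X (f : R[X][X]) :
    orderedEval z y (f * X) = orderedEval z y f * z := eval₂_mul_X _ _

theorem orderedEval_C_mul (q : R[X]) (f : R[X][X]) :
    orderedEval z y (C q * f) = aeval y q * orderedEval z y f := by
  rw [← smul_eq_C_mul]
  exact eval₂_smul _ _ _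

theorem orderedEval_mul_of_mul_eq_mul_add_one (h : z * y = y * z + 1) (f : R[X][X]) :
    orderedEval z y f * y = y * orderedEval z y f + orderedEval z y (derivative f) := by
  induction f using Polynomial.induction_on with
  | C q =>
    rw [orderedEval_C, derivative_C, map_zero, add_zero]
    simpa using ((Commute.all X q).map (aeval y)).symm.eq
  | add f g hf hg =>
    simp only [map_add, mul_add, add_mul, hf, hg]
    abel
  | monomial n a ih =>
    rw [pow_succ, ← mul_assoc]
    generalize C a * X ^ n = f at ih ⊢
    rw [derivative_mul, derivative_X, mul_one, map_add, orderedEval_mul_X, orderedEval_mul_X,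
      mul_assoc, h, mul_add, mul_one, ← mul_assoc, ih]
    noncomm_ring

theorem orderedEval_map {B : Type w} [Ring B] [Algebra R B] (φ : A →ₐ[R] B) (f : R[X][X]) :
    φ (orderedEval z y f) = orderedEval (φ z) (φ y) f := by
  induction f using Polynomial.induction_on' with
  | add f g hf hg => simp only [map_add, hf, hg]
  | monomial n q =>
    simp [orderedEval, aeval_algHom_apply]

theorem aeval_injective_of_mul_eq_mul_add_one [IsAddTorsionFree R]
    (hR : Function.Injective (algebraMap R A)) (h : z * y = y * z + 1) :
    Function.Injective (aeval y : R[X] →ₐ[R] A) :=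
  injective_of_map_derivative_eq_zero (aeval y).toAddMonoidHom
    (fun r hr ↦ (injective_iff_map_eq_zero _).mp hR r (by simpa using hr))
    fun p (hp : aeval y p = 0) ↦ by
      simpa [hp] using (mul_aeval_of_mul_eq_mul_add_one h p).symm

theorem orderedEval_injective [IsDomain R] [CharZero R] (hR : Function.Injective (algebraMap R A))
    (h : z * y = y * z + 1) : Function.Injective (orderedEval (R := R) z y) :=
  injective_of_map_derivative_eq_zero (orderedEval z y).toAddMonoidHom
    (fun q hq ↦ (injective_iff_map_eq_zero _).mp (aeval_injective_of_mul_eq_mul_add_one hR h) q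
      (by simpa [orderedEval_C] using hq))
    fun f (hf : orderedEval z y f = 0) ↦ by
      simpa [hf] using (orderedEval_mul_of_mul_eq_mul_add_one h f).symm

end OrderedEval

namespace WeylAlg

theorem Ws_mul_Wt : Ws * Wt = Wt * Ws + 1 := by
  simpa only [Ws, Wt, map_mul, map_add, map_one] using RingQuot.mkAlgHom_rel ℚ weylRel.rel

variable {A : Type u} [Ring A] [Algebra ℚ A] {z y : A}

noncomputable def lift (h : z * y = y * z + 1) : WeylAlg →ₐ[ℚ] A :=
  RingQuot.liftAlgHom ℚ ⟨FreeAlgebra.lift ℚ ![z, y], by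
    rintro _ _ ⟨⟩
    simpa using h⟩

theorem lift_Ws (h : z * y = y * z + 1) : lift h Ws = z := by
  simp [lift, Ws]

theorem lift_Wt (h : z * y = y * z + 1) : lift h Wt = y := by
  simp [lift, Wt]

theorem orderedEval_surjective : Function.Surjective (orderedEval (R := ℚ) Ws Wt) := by
  set S := LinearMap.range (orderedEval (R := ℚ) Ws Wt)
  have hmul : ∀ a, ∀ m ∈ S, m * RingQuot.mkAlgHom ℚ weylRel a ∈ S := by
    intro a
    induction a using FreeAlgebra.induction with
    | grade0 r =>
      intro m hm
      rw [AlgHom.commutes, ← Algebra.commutes, ← Algebra.smul_def]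
      exact S.smul_mem r hm
    | grade1 i =>
      rintro _ ⟨f, rfl⟩
      fin_cases i
      · exact ⟨f * X, orderedEval_mul_X f⟩
      · refine ⟨C X * f + derivative f, ?_⟩
        rw [map_add, orderedEval_C_mul, aeval_X]
        exact (orderedEval_mul_of_mul_eq_mul_add_one Ws_mul_Wt f).symm
    | mul a b ha hb =>
      intro m hm
      rw [map_mul, ← mul_assoc]
      exact hb _ (ha m hm)
    | add a b ha hb =>
      intro m hm
      rw [map_add, mul_add]
      exact S.add_mem (ha m hm) (hb m hm)
  intro x
  obtain ⟨a, rfl⟩ := RingQuot.mkAlgHom_surjective ℚ weylRel x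
  obtain ⟨f, hf⟩ := hmul a 1 ⟨1, eval₂_one _ _⟩
  exact ⟨f, hf.trans (one_mul _)⟩

theorem lift_injective [Nontrivial A] (h : z * y = y * z + 1) : Function.Injective (lift h) := by
  have hcomp : lift h ∘ orderedEval Ws Wt = orderedEval (R := ℚ) z y := by
    ext f
    simp [orderedEval_map, lift_Ws, lift_Wt]
  refine Function.Injective.of_comp_right ?_ orderedEval_surjective
  rw [hcomp]
  exact orderedEval_injective (algebraMap ℚ A).injective h

end WeylAlg

theorem weyl_algebra_embeds_in_skew_quotients
    (D : Type*) [DivisionRing D] [Algebra ℚ D]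
    (X Y : D) (hY : Y ≠ 0) (hXY : X * Y = Y * (X + 1)) :
    (Y⁻¹ * X) * Y - Y * (Y⁻¹ * X) = 1 ∧
    ∃ φ : WeylAlg →ₐ[ℚ] D, Function.Injective φ ∧ φ Ws = Y⁻¹ * X ∧ φ Wt = Y := by
  have h : (Y⁻¹ * X) * Y = Y * (Y⁻¹ * X) + 1 := by
    rw [mul_assoc, hXY, inv_mul_cancel_left₀ hY, mul_inv_cancel_left₀ hY]
  exact ⟨sub_eq_iff_eq_add'.mpr h, WeylAlg.lift h, WeylAlg.lift_injective h,
    WeylAlg.lift_Ws h, WeylAlg.lift_Wt h⟩
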